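/- Consider the generalized fair learning problem: minimize E_{(x,s)∼P_{X,S}}[ TV(Q_{Ŷ|X=x,S=s}, P_{Y|X=x,S=s}) ] over conditional distributions Q_{Ŷ|X,S} subject to I(Ŷ; S) ≤ ε (mutual information in nats), where Ŷ is distributed according to Q_{Ŷ|X,S} · P_{X,S}. Suppose there exists φ : 𝒳 × 𝒴 → ℝ such that P(X=x | Y=y, S=s) / P(X=x | S=s) = φ(x, y) for all x ∈ 𝒳, y ∈ 𝒴, s ∈ 𝒮, and s_max ∈ 𝒮 satisfies P_S(s_max) = 1/2 + δ for some δ > 0. Then for any optimal solution Q*, the induced Ŷ satisfies: E_{s∼P_S}[ TV(P_{Ŷ|S=s}, P_{Y|S=s_max}) ] ≤ (1/2 + 1/(4δ)) · √(2ε). -/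

import Mathlib

/-!
Since `P(x | y, s) / P(x | s) = φ(x, y)` does not depend on `s`, we have
`P(y | x, s) = φ(x, y) P(y | s)`. Hence the rule predicting `P(Y | X = x, S = s_max)` whatever `s`
is makes `Ŷ` independent of `S`, so it is feasible, and its cost is
`E_s TV(P_{Y|S=s}, P_{Y|S=s_max})`. By optimality this bounds `E_s TV(P_{Ŷ|S=s}, P_{Y|S=s})`,
which is at most the cost of `Q*`. Chaining triangle inequalities through `P_Ŷ` and `P_{Ŷ|S=s_max}`,
the group `s_max` of weight `1/2 + δ` leaves a slack, which gives
`2δ (TV(P_Ŷ, P_{Ŷ|S=s_max}) + TV(P_{Ŷ|S=s_max}, P_{Y|S=s_max})) ≤ E_s TV(P_{Ŷ|S=s}, P_Ŷ)`.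
Finally `I(Ŷ; S)` is the Kullback–Leibler divergence of `P_{Ŷ,S}` from `P_Ŷ ⊗ P_S`, so Pinsker's
inequality bounds `E_s TV(P_{Ŷ|S=s}, P_Ŷ)` by `√(2ε) / 2`.
-/

open Finset

noncomputable section

variable {𝒳 𝒴 𝒮 : Type*} [Fintype 𝒳] [Fintype 𝒴] [Fintype 𝒮]

/-- Total variation distance between two finitely supported distributions on `𝒴`,
`TV(p, q) = (1/2) ∑ y, |p y - q y|`. -/
def TV (p q : 𝒴 → ℝ) : ℝ := (1 / 2) * ∑ y, |p y - q y|

/-- Marginal distribution of `(X, S)` under the joint `P` of `(X, Y, S)`. -/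
def margXS (P : 𝒳 → 𝒴 → 𝒮 → ℝ) (x : 𝒳) (s : 𝒮) : ℝ := ∑ y, P x y s

/-- Marginal distribution of `(Y, S)`. -/
def margYS (P : 𝒳 → 𝒴 → 𝒮 → ℝ) (y : 𝒴) (s : 𝒮) : ℝ := ∑ x, P x y s

/-- Marginal distribution of `S`. -/
def margS (P : 𝒳 → 𝒴 → 𝒮 → ℝ) (s : 𝒮) : ℝ := ∑ x, margXS P x s

/-- Marginal distribution of `X`. -/
def margX (P : 𝒳 → 𝒴 → 𝒮 → ℝ) (x : 𝒳) : ℝ := ∑ s, margXS P x s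

/-- Conditional distribution of `Y` given `X = x, S = s`. -/
def condYXS (P : 𝒳 → 𝒴 → 𝒮 → ℝ) (x : 𝒳) (s : 𝒮) (y : 𝒴) : ℝ := P x y s / margXS P x s

/-- Conditional distribution of `Y` given `S = s`. -/
def condYS (P : 𝒳 → 𝒴 → 𝒮 → ℝ) (s : 𝒮) (y : 𝒴) : ℝ := margYS P y s / margS P s

/-- The ratio `P(X=x | Y=y, S=s) / P(X=x | S=s)`. -/
def condRatio (P : 𝒳 → 𝒴 → 𝒮 → ℝ) (x : 𝒳) (y : 𝒴) (s : 𝒮) : ℝ :=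
  (P x y s / margYS P y s) / (margXS P x s / margS P s)

/-- A conditional distribution `Q`: for every `(x, s)`, `Q x s` is a probability
distribution on labels. -/
def IsRule (Q : 𝒳 → 𝒮 → 𝒴 → ℝ) : Prop :=
  (∀ x s y, 0 ≤ Q x s y) ∧ ∀ x s, ∑ y, Q x s y = 1

/-- The generalized objective: `E_{(x,s)∼P_{X,S}}[TV(Q_{Ŷ|X=x,S=s}, P_{Y|X=x,S=s})]`. -/
def objective (P : 𝒳 → 𝒴 → 𝒮 → ℝ) (Q : 𝒳 → 𝒮 → 𝒴 → ℝ) : ℝ :=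
  ∑ x, ∑ s, margXS P x s * TV (Q x s) (condYXS P x s)

/-- Joint distribution of `(Ŷ, S)` induced by `Q · P_{X,S}`. -/
def jointYhatS (P : 𝒳 → 𝒴 → 𝒮 → ℝ) (Q : 𝒳 → 𝒮 → 𝒴 → ℝ) (yh : 𝒴) (s : 𝒮) : ℝ :=
  ∑ x, margXS P x s * Q x s yh

/-- Marginal distribution of the prediction `Ŷ`. -/
def margYhat (P : 𝒳 → 𝒴 → 𝒮 → ℝ) (Q : 𝒳 → 𝒮 → 𝒴 → ℝ) (yh : 𝒴) : ℝ :=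
  ∑ s, jointYhatS P Q yh s

/-- Conditional distribution of the prediction `Ŷ` given `S = s`. -/
def condYhatS (P : 𝒳 → 𝒴 → 𝒮 → ℝ) (Q : 𝒳 → 𝒮 → 𝒴 → ℝ) (s : 𝒮) (yh : 𝒴) : ℝ :=
  jointYhatS P Q yh s / margS P s

/-- Mutual information (in nats) between the prediction `Ŷ` and `S`. -/
def MI (P : 𝒳 → 𝒴 → 𝒮 → ℝ) (Q : 𝒳 → 𝒮 → 𝒴 → ℝ) : ℝ :=
  ∑ yh, ∑ s, jointYhatS P Q yh s *
    Real.log (jointYhatS P Q yh s / (margYhat P Q yh * margS P s))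

open Real InformationTheory

section

open Set

lemma monotoneOn_add_one_mul_log_sub_two_mul :
    MonotoneOn (fun t : ℝ => (t + 1) * log t - 2 * (t - 1)) (Ioi 0) := by
  have hderiv : ∀ t ∈ Ioi (0 : ℝ), HasDerivAt (fun t : ℝ => (t + 1) * log t - 2 * (t - 1))
      (log t + t⁻¹ - 1) t := fun t (ht : 0 < t) => by
    refine ((((hasDerivAt_id' t).add_const 1).mul (hasDerivAt_log ht.ne')).sub
      (((hasDerivAt_id' t).sub_const 1).const_mul 2)).congr_deriv ?_
    field_simp [ht.ne']
    ring
  refine monotoneOn_of_hasDerivWithinAt_nonneg (convex_Ioi 0) (f' := fun t => log t + t⁻¹ - 1)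
    (fun t ht => (hderiv t ht).continuousAt.continuousWithinAt) (fun t ht => ?_) (fun t ht => ?_)
  · rw [interior_Ioi] at ht ⊢
    exact (hderiv t ht).hasDerivWithinAt
  · rw [interior_Ioi] at ht
    linarith [one_sub_inv_le_log_of_pos (show 0 < t from ht)]

lemma hasDerivAt_mul_klFun_sub_sq {t : ℝ} (ht : t ≠ 0) :
    HasDerivAt (fun t => 2 * (t + 2) * klFun t - 3 * (t - 1) ^ 2)
      (4 * ((t + 1) * log t - 2 * (t - 1))) t := by
  refine ((((hasDerivAt_id' t).add_const 2).const_mul 2).mul (hasDerivAt_klFun ht)).sub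
    (((hasDerivAt_id' t).sub_const 1).pow 2 |>.const_mul 3) |>.congr_deriv ?_
  rw [klFun_apply]
  push_cast
  ring

-- The derivative of the difference has the sign of `t - 1`.
lemma three_mul_sq_sub_one_le_mul_klFun {t : ℝ} (ht : 0 ≤ t) :
    3 * (t - 1) ^ 2 ≤ 2 * (t + 2) * klFun t := by
  set h : ℝ → ℝ := fun t => 2 * (t + 2) * klFun t - 3 * (t - 1) ^ 2
  suffices h 1 ≤ h t by simpa [h, klFun_one] using this
  have hk := monotoneOn_add_one_mul_log_sub_two_mul
  have hcont : Continuous h := by fun_prop (disch := exact continuous_klFun)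
  rcases ht.eq_or_lt with rfl | ht
  · norm_num [h, klFun_zero, klFun_one]
  rcases le_total t 1 with ht1 | ht1
  · refine antitoneOn_of_hasDerivWithinAt_nonpos (convex_Ioc 0 1) hcont.continuousOn
      (f' := fun x => 4 * ((x + 1) * log x - 2 * (x - 1)))
      (fun x hx => ?_) (fun x hx => ?_) ⟨ht, ht1⟩ ⟨zero_lt_one, le_rfl⟩ ht1
    · rw [interior_Ioc] at hx
      exact (hasDerivAt_mul_klFun_sub_sq hx.1.ne').hasDerivWithinAt
    · rw [interior_Ioc] at hx
      have := hk hx.1 (mem_Ioi.2 zero_lt_one) hx.2.le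
      norm_num at this
      linarith
  · refine monotoneOn_of_hasDerivWithinAt_nonneg (convex_Ici 1) hcont.continuousOn
      (f' := fun x => 4 * ((x + 1) * log x - 2 * (x - 1)))
      (fun x hx => ?_) (fun x hx => ?_) self_mem_Ici ht1 ht1
    · rw [interior_Ici] at hx
      exact (hasDerivAt_mul_klFun_sub_sq (by linarith [mem_Ioi.1 hx])).hasDerivWithinAt
    · rw [interior_Ici] at hx
      have := hk (mem_Ioi.2 zero_lt_one) (mem_Ioi.2 (zero_lt_one.trans hx)) hx.le
      norm_num at this
      linarith

end

lemma three_mul_sq_sub_le_mul_klFun {p q : ℝ} (hp : 0 ≤ p) (hq : 0 ≤ q) (hpq : q = 0 → p = 0) :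
    3 * (p - q) ^ 2 ≤ 2 * (p + 2 * q) * (q * klFun (p / q)) := by
  rcases hq.eq_or_lt with rfl | hq
  · simp [hpq rfl]
  have key := three_mul_sq_sub_one_le_mul_klFun (div_nonneg hp hq.le)
  have hp_eq : p = p / q * q := by field_simp
  calc 3 * (p - q) ^ 2 = q ^ 2 * (3 * (p / q - 1) ^ 2) := by rw [hp_eq]; field_simp
    _ ≤ q ^ 2 * (2 * (p / q + 2) * klFun (p / q)) := by gcongr
    _ = 2 * (p + 2 * q) * (q * klFun (p / q)) := by rw [hp_eq]; field_simp

lemma mul_klFun_div {p q : ℝ} (hpq : q = 0 → p = 0) :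
    q * klFun (p / q) = p * log (p / q) + q - p := by
  rcases eq_or_ne q 0 with rfl | hq
  · simp [hpq rfl]
  rw [klFun_apply]
  field_simp

/-- **Pinsker's inequality**, via Cauchy–Schwarz with the weights `(p + 2 q) / 3`. -/
theorem sq_sum_abs_sub_le_two_mul_sum_mul_log_div {ι : Type*} [Fintype ι] {p q : ι → ℝ}
    (hp : ∀ i, 0 ≤ p i) (hq : ∀ i, 0 ≤ q i) (hp1 : ∑ i, p i = 1) (hq1 : ∑ i, q i = 1)
    (hpq : ∀ i, q i = 0 → p i = 0) :
    (∑ i, |p i - q i|) ^ 2 ≤ 2 * ∑ i, p i * log (p i / q i) := by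
  have hCS := sum_sq_le_sum_mul_sum_of_sq_le_mul univ
    (r := fun i => |p i - q i|) (f := fun i => (p i + 2 * q i) / 3)
    (g := fun i => 2 * (q i * klFun (p i / q i)))
    (fun i _ => by linarith [hp i, hq i])
    (fun i _ => by have := mul_nonneg (hq i) (klFun_nonneg (div_nonneg (hp i) (hq i))); linarith)
    (fun i _ => by
      have := three_mul_sq_sub_le_mul_klFun (hp i) (hq i) (hpq i)
      rw [sq_abs]; linarith)
  have hf : ∑ i, (p i + 2 * q i) / 3 = 1 := by
    rw [← sum_div, sum_add_distrib, ← mul_sum, hp1, hq1]; norm_num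
  have hg : ∑ i, 2 * (q i * klFun (p i / q i)) = 2 * ∑ i, p i * log (p i / q i) := by
    simp only [mul_klFun_div (hpq _), ← mul_sum, sum_sub_distrib, sum_add_distrib, hp1, hq1,
      add_sub_cancel_right]
  rwa [hf, hg, one_mul] at hCS

lemma TV_comm (p q : 𝒴 → ℝ) : TV p q = TV q p := by
  simp only [TV, abs_sub_comm]

lemma TV_self (p : 𝒴 → ℝ) : TV p p = 0 := by
  simp [TV]

lemma TV_triangle (p q r : 𝒴 → ℝ) : TV p r ≤ TV p q + TV q r := by
  unfold TV
  rw [← mul_add, ← sum_add_distrib]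
  gcongr with y
  exact abs_sub_le _ _ _

lemma mul_TV {c : ℝ} (hc : 0 ≤ c) (p q : 𝒴 → ℝ) :
    c * TV p q = 1 / 2 * ∑ y, |c * p y - c * q y| := by
  simp only [TV, ← mul_sub, abs_mul, abs_of_nonneg hc, ← mul_sum]
  ring

lemma sum_mul_TV_le_of_sum_mul_TV_le {ι : Type*} [Fintype ι] {w : ι → ℝ} (hw : ∀ i, 0 ≤ w i)
    (hw1 : ∑ i, w i = 1) {i₀ : ι} {δ : ℝ} (hδ : 0 < δ) (hi₀ : w i₀ = 1 / 2 + δ)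
    (a b : ι → 𝒴 → ℝ) (m : 𝒴 → ℝ)
    (hab : ∑ i, w i * TV (a i) (b i) ≤ ∑ i, w i * TV (b i) (b i₀)) :
    ∑ i, w i * TV (a i) (b i₀) ≤ (1 + 1 / (2 * δ)) * ∑ i, w i * TV (a i) m := by
  set E := ∑ i, w i * TV (a i) m
  set G := TV m (a i₀)
  set D := TV (a i₀) (b i₀)
  have hsum (f g : ι → ℝ) : ∑ i, w i * (f i + g i) = ∑ i, w i * f i + ∑ i, w i * g i := by
    simp only [mul_add, sum_add_distrib]
  have hconst (c : ℝ) : ∑ i, w i * c = c := by rw [← sum_mul, hw1, one_mul]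
  -- At `i = i₀` the chained triangle inequality `hf` has slack `2 (G + D)`, and `w i₀ > 1/2`.
  have hslack : 2 * δ * (G + D) ≤ E := by
    let f i := TV (a i) (b i) + (TV (a i) m + (G + D)) - TV (b i) (b i₀)
    have hf : ∀ i, 0 ≤ f i := fun i => by
      linarith [TV_triangle (b i) (a i) (b i₀), TV_comm (b i) (a i),
        TV_triangle (a i) m (b i₀), TV_triangle m (a i₀) (b i₀)]
    have hf_i₀ : w i₀ * f i₀ ≤ ∑ i, w i * f i :=
      single_le_sum (fun i _ => mul_nonneg (hw i) (hf i)) (mem_univ i₀)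
    simp only [f, mul_sub, sum_sub_distrib, hsum, hconst, TV_self] at hf_i₀
    rw [hi₀, TV_comm (a i₀) m] at hf_i₀
    linarith
  calc ∑ i, w i * TV (a i) (b i₀) ≤ ∑ i, w i * (TV (a i) m + (G + D)) := by
        gcongr with i
        · exact hw i
        · linarith [TV_triangle (a i) m (b i₀), TV_triangle m (a i₀) (b i₀)]
    _ = E + (G + D) := by rw [hsum, hconst]
    _ ≤ (1 + 1 / (2 * δ)) * E := by
        have : G + D ≤ E / (2 * δ) := by rw [le_div_iff₀ (by positivity)]; linarith
        rw [add_mul, one_mul, one_div_mul_eq_div]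
        linarith

section FairLearning

set_option linter.unusedSectionVars false

variable {P : 𝒳 → 𝒴 → 𝒮 → ℝ} {Q : 𝒳 → 𝒮 → 𝒴 → ℝ}

lemma margS_pos [Nonempty 𝒳] (hXS : ∀ x s, 0 < margXS P x s) (s : 𝒮) : 0 < margS P s :=
  sum_pos (fun x _ => hXS x s) univ_nonempty

lemma sum_margS (hP1 : ∑ x, ∑ y, ∑ s, P x y s = 1) : ∑ s, margS P s = 1 := by
  rw [← hP1]
  simp only [margS, margXS]
  rw [sum_comm]
  exact sum_congr rfl fun x _ => sum_comm

lemma jointYhatS_nonneg (hP0 : ∀ x y s, 0 ≤ P x y s) (hQ : IsRule Q) (y : 𝒴) (s : 𝒮) :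
    0 ≤ jointYhatS P Q y s :=
  sum_nonneg fun x _ => mul_nonneg (sum_nonneg fun y _ => hP0 x y s) (hQ.1 x s y)

lemma sum_jointYhatS (hQ : IsRule Q) (s : 𝒮) : ∑ y, jointYhatS P Q y s = margS P s := by
  simp only [jointYhatS, margS]
  rw [sum_comm]
  exact sum_congr rfl fun x _ => by rw [← mul_sum, hQ.2 x s, mul_one]

lemma margS_mul_TV_condYhatS {s : 𝒮} (hs : 0 < margS P s) (p : 𝒴 → ℝ) :
    margS P s * TV (condYhatS P Q s) p = 1 / 2 * ∑ y, |jointYhatS P Q y s - margS P s * p y| := by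
  simp only [mul_TV hs.le, condYhatS, mul_div_cancel₀ _ hs.ne']

lemma sq_two_mul_sum_TV_condYhatS_margYhat_le (hP0 : ∀ x y s, 0 ≤ P x y s)
    (hS : ∀ s, 0 < margS P s) (hS1 : ∑ s, margS P s = 1) (hQ : IsRule Q) :
    (2 * ∑ s, margS P s * TV (condYhatS P Q s) (margYhat P Q)) ^ 2 ≤ 2 * MI P Q := by
  have hJ := jointYhatS_nonneg hP0 hQ
  have hM1 : ∑ y, margYhat P Q y = 1 := by
    simp only [margYhat]
    rw [sum_comm]
    simp only [sum_jointYhatS hQ, hS1]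
  have hJM (y : 𝒴) (s : 𝒮) : jointYhatS P Q y s ≤ margYhat P Q y :=
    single_le_sum (fun s _ => hJ y s) (mem_univ s)
  have key := sq_sum_abs_sub_le_two_mul_sum_mul_log_div (ι := 𝒴 × 𝒮)
    (p := fun z => jointYhatS P Q z.1 z.2) (q := fun z => margYhat P Q z.1 * margS P z.2)
    (fun z => hJ z.1 z.2) (fun z => mul_nonneg ((hJ z.1 z.2).trans (hJM z.1 z.2)) (hS z.2).le)
    (by rw [Fintype.sum_prod_type, sum_comm]; simp only [sum_jointYhatS hQ, hS1])
    (by simp only [Fintype.sum_prod_type, ← sum_mul_sum, hM1, hS1, mul_one])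
    (fun z hz => le_antisymm
      ((hJM z.1 z.2).trans_eq ((mul_eq_zero.1 hz).resolve_right (hS z.2).ne')) (hJ z.1 z.2))
  rw [Fintype.sum_prod_type, Fintype.sum_prod_type, sum_comm] at key
  simpa only [MI, mul_sum, margS_mul_TV_condYhatS (hS _), mul_comm (margYhat P Q _), ← mul_assoc,
    mul_one_div_cancel (two_ne_zero (α := ℝ)), one_mul] using key

lemma sum_margS_mul_TV_condYhatS_condYS_le_objective (hXS : ∀ x s, 0 < margXS P x s)
    (hS : ∀ s, 0 < margS P s) :
    ∑ s, margS P s * TV (condYhatS P Q s) (condYS P s) ≤ objective P Q := by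
  have hJ (y : 𝒴) (s : 𝒮) : jointYhatS P Q y s - margS P s * condYS P s y
      = ∑ x, (margXS P x s * Q x s y - P x y s) := by
    rw [condYS, mul_div_cancel₀ _ (hS s).ne', sum_sub_distrib]
    rfl
  calc ∑ s, margS P s * TV (condYhatS P Q s) (condYS P s)
      = ∑ s, 1 / 2 * ∑ y, |∑ x, (margXS P x s * Q x s y - P x y s)| := by
        simp only [margS_mul_TV_condYhatS (hS _), hJ]
    _ ≤ ∑ s, 1 / 2 * ∑ y, ∑ x, |margXS P x s * Q x s y - P x y s| := by
        gcongr
        exact abs_sum_le_sum_abs _ _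
    _ = objective P Q := by
        rw [objective, sum_comm]
        refine sum_congr rfl fun s _ => ?_
        simp only [mul_TV (hXS _ s).le, condYXS, mul_div_cancel₀ _ (hXS _ s).ne', ← mul_sum]
        rw [sum_comm]

lemma condYXS_eq_mul_condYS {φ : 𝒳 → 𝒴 → ℝ} (hXS : ∀ x s, 0 < margXS P x s)
    (hYS : ∀ y s, 0 < margYS P y s) (hS : ∀ s, 0 < margS P s)
    (hφ : ∀ x y s, condRatio P x y s = φ x y) (x : 𝒳) (s : 𝒮) (y : 𝒴) :
    condYXS P x s y = φ x y * condYS P s y := by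
  rw [← hφ x y s, condRatio, condYXS, condYS]
  field_simp [(hXS x s).ne', (hYS y s).ne', (hS s).ne']

lemma sum_margXS_mul_eq_margS {φ : 𝒳 → 𝒴 → ℝ} (hXS : ∀ x s, 0 < margXS P x s)
    (hYS : ∀ y s, 0 < margYS P y s) (hS : ∀ s, 0 < margS P s)
    (hφ : ∀ x y s, condRatio P x y s = φ x y) (y : 𝒴) (s : 𝒮) :
    ∑ x, margXS P x s * φ x y = margS P s := by
  have hb : 0 < condYS P s y := div_pos (hYS y s) (hS s)
  have hP (x : 𝒳) : margXS P x s * φ x y * condYS P s y = P x y s := by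
    rw [mul_assoc, ← condYXS_eq_mul_condYS hXS hYS hS hφ, condYXS, mul_div_cancel₀ _ (hXS x s).ne']
  rw [← mul_left_inj' hb.ne', sum_mul]
  simp only [hP]
  rw [condYS, mul_div_cancel₀ _ (hS s).ne']
  rfl

def condYXSAt (P : 𝒳 → 𝒴 → 𝒮 → ℝ) (s₀ : 𝒮) (x : 𝒳) (_ : 𝒮) : 𝒴 → ℝ := condYXS P x s₀

lemma isRule_condYXSAt (hP0 : ∀ x y s, 0 ≤ P x y s) (hXS : ∀ x s, 0 < margXS P x s) (s₀ : 𝒮) :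
    IsRule (condYXSAt P s₀) :=
  ⟨fun x _ y => div_nonneg (hP0 x y s₀) (hXS x s₀).le,
    fun x _ => by simp only [condYXSAt, condYXS, ← sum_div]; exact div_self (hXS x s₀).ne'⟩

lemma jointYhatS_condYXSAt {φ : 𝒳 → 𝒴 → ℝ} (hXS : ∀ x s, 0 < margXS P x s)
    (hYS : ∀ y s, 0 < margYS P y s) (hS : ∀ s, 0 < margS P s)
    (hφ : ∀ x y s, condRatio P x y s = φ x y) (s₀ : 𝒮) (y : 𝒴) (s : 𝒮) :
    jointYhatS P (condYXSAt P s₀) y s = margS P s * condYS P s₀ y := by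
  simp only [jointYhatS, condYXSAt, condYXS_eq_mul_condYS hXS hYS hS hφ, ← mul_assoc, ← sum_mul,
    sum_margXS_mul_eq_margS hXS hYS hS hφ]

lemma MI_eq_zero_of_jointYhatS_eq_mul (hS1 : ∑ s, margS P s = 1) {ν : 𝒴 → ℝ}
    (hν : ∀ y s, jointYhatS P Q y s = margS P s * ν y) : MI P Q = 0 := by
  have hM (y : 𝒴) : margYhat P Q y = ν y := by
    rw [margYhat, sum_congr rfl fun s _ => hν y s, ← sum_mul, hS1, one_mul]
  refine sum_eq_zero fun y _ => sum_eq_zero fun s _ => ?_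
  rw [hM, hν, mul_comm (ν y)]
  rcases eq_or_ne (margS P s * ν y) 0 with h | h
  · rw [h, zero_mul]
  · rw [div_self h, Real.log_one, mul_zero]

lemma objective_condYXSAt {φ : 𝒳 → 𝒴 → ℝ} (hP0 : ∀ x y s, 0 ≤ P x y s)
    (hXS : ∀ x s, 0 < margXS P x s) (hYS : ∀ y s, 0 < margYS P y s) (hS : ∀ s, 0 < margS P s)
    (hφ : ∀ x y s, condRatio P x y s = φ x y) (s₀ : 𝒮) :
    objective P (condYXSAt P s₀) = ∑ s, margS P s * TV (condYS P s) (condYS P s₀) := by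
  have hφ0 (x : 𝒳) (y : 𝒴) : 0 ≤ φ x y := by
    rw [← hφ x y s₀, condRatio]
    exact div_nonneg (div_nonneg (hP0 x y s₀) (hYS y s₀).le) (div_pos (hXS x s₀) (hS s₀)).le
  have hterm (x : 𝒳) (s : 𝒮) : margXS P x s * TV (condYXSAt P s₀ x s) (condYXS P x s)
      = 1 / 2 * ∑ y, margXS P x s * φ x y * |condYS P s₀ y - condYS P s y| := by
    simp only [mul_TV (hXS x s).le, condYXSAt, condYXS_eq_mul_condYS hXS hYS hS hφ, ← mul_assoc,
      ← mul_sub, abs_mul, abs_of_pos (hXS x s), abs_of_nonneg (hφ0 x _)]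
  rw [objective, sum_comm]
  refine sum_congr rfl fun s _ => ?_
  simp only [hterm, ← mul_sum]
  rw [sum_comm]
  simp only [← sum_mul, sum_margXS_mul_eq_margS hXS hYS hS hφ, TV, mul_sum]
  refine sum_congr rfl fun y _ => by rw [abs_sub_comm]; ring

end FairLearning

/-- **Theorem 3 (mutual information case).** In the generalized fair learning problem, if
the ratio `P(x|y,s)/P(x|s)` does not depend on `s` and `P_S(s_max) = 1/2 + δ` with
`δ > 0`, then any optimal solution among rules with `I(Ŷ; S) ≤ ε` satisfies
`E_{s∼P_S}[TV(P_{Ŷ|S=s}, P_{Y|S=s_max})] ≤ (1/2 + 1/(4δ)) √(2ε)`. -/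
theorem generalized_mi_fair_optimal_inductive_bias
    (P : 𝒳 → 𝒴 → 𝒮 → ℝ)
    (hP0 : ∀ x y s, 0 ≤ P x y s)
    (hP1 : ∑ x, ∑ y, ∑ s, P x y s = 1)
    (hXS : ∀ x s, 0 < margXS P x s)
    (hYS : ∀ y s, 0 < margYS P y s)
    (φ : 𝒳 → 𝒴 → ℝ)
    (hφ : ∀ x y s, condRatio P x y s = φ x y)
    (smax : 𝒮) (δ : ℝ) (hδ : 0 < δ) (hsmax : margS P smax = 1 / 2 + δ)
    (ε : ℝ)
    (Q : 𝒳 → 𝒮 → 𝒴 → ℝ) (hQ : IsRule Q)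
    (hfair : MI P Q ≤ ε)
    (hopt : ∀ Q' : 𝒳 → 𝒮 → 𝒴 → ℝ, IsRule Q' → MI P Q' ≤ ε →
      objective P Q ≤ objective P Q') :
    ∑ s, margS P s * TV (condYhatS P Q s) (condYS P smax)
      ≤ (1 / 2 + 1 / (4 * δ)) * Real.sqrt (2 * ε) := by
  have : Nonempty 𝒳 := by
    by_contra h
    simp [not_nonempty_iff.1 h] at hP1
  have hS := margS_pos hXS
  have hS1 := sum_margS hP1
  set E := ∑ s, margS P s * TV (condYhatS P Q s) (margYhat P Q)
  have hPinsker := sq_two_mul_sum_TV_condYhatS_margYhat_le hP0 hS hS1 hQ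
  have hε : 0 ≤ ε := by nlinarith [sq_nonneg (2 * E)]
  have hE : 2 * E ≤ Real.sqrt (2 * ε) := Real.le_sqrt_of_sq_le (by linarith)
  have hfair' : MI P (condYXSAt P smax) ≤ ε := by
    rw [MI_eq_zero_of_jointYhatS_eq_mul hS1 (jointYhatS_condYXSAt hXS hYS hS hφ smax)]
    exact hε
  have hfit : ∑ s, margS P s * TV (condYhatS P Q s) (condYS P s)
      ≤ ∑ s, margS P s * TV (condYS P s) (condYS P smax) :=
    (sum_margS_mul_TV_condYhatS_condYS_le_objective hXS hS).trans
      ((hopt _ (isRule_condYXSAt hP0 hXS smax) hfair').trans_eq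
        (objective_condYXSAt hP0 hXS hYS hS hφ smax))
  calc ∑ s, margS P s * TV (condYhatS P Q s) (condYS P smax)
      ≤ (1 + 1 / (2 * δ)) * E :=
        sum_mul_TV_le_of_sum_mul_TV_le (fun s => (hS s).le) hS1 hδ hsmax _ _ _ hfit
    _ ≤ (1 / 2 + 1 / (4 * δ)) * Real.sqrt (2 * ε) := by
        rw [show 1 / 2 + 1 / (4 * δ) = (1 + 1 / (2 * δ)) / 2 by field_simp; ring]
        rw [div_mul_eq_mul_div, le_div_iff₀ two_pos, mul_assoc, mul_comm E]
        gcongr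

end
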